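/- Let p be an odd prime, k \geq 1, and d a positive integer not divisible by p. Then \binom{3 p^k d - 1}{p^k d - 1} \equiv \binom{3 p^{k-1} d - 1}{p^{k-1} d - 1} \pmod{p^{3k}}. -/

import Mathlib

/-!
Put `m = p ^ k * d = p * n`. Splitting `(m - 1)!` and `(3m - 1)! / (2m)!` into the factors prime to
`p` and the multiples of `p` gives `C(3m-1, m-1) = C(3n-1, n-1) · ∏ (1 + 2m/j)` over `0 < j < m`,
`p ∤ j`. Modulo `p ^ (3k)` we have `m³ = 0`, and pairing `j` with `m - j` gives
`(1 + 2m/j)(1 + 2m/(m-j)) = 1 - 6m²/j²`, so the product `G` satisfies `G² = 1 - 6m² ∑ j⁻²`.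
Modulo `p ^ k` the sum `∑ j⁻²` is `d` copies of the sum over the units, which inversion
permutes, so `6 ∑ j⁻² ≡ 6 ∑ j² ≡ 0` by `6 ∑_{i<N} i² = N(N-1)(2N-1)`; hence `G² = 1`.
Finally `G ≡ 1 mod m` and `2` is a unit, so `G = 1`.
-/

open Finset Nat

def nonMultiples (p m : ℕ) : Finset ℕ := {j ∈ range m | ¬ p ∣ j}

@[simp]
lemma mem_nonMultiples {p m j : ℕ} : j ∈ nonMultiples p m ↔ j < m ∧ ¬ p ∣ j := by
  simp [nonMultiples]

lemma sub_mem_nonMultiples {p m j : ℕ} (hpm : p ∣ m) (hj : j ∈ nonMultiples p m) :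
    m - j ∈ nonMultiples p m := by
  rw [mem_nonMultiples] at hj ⊢
  obtain ⟨hjm, hpj⟩ := hj
  have hj0 : j ≠ 0 := by rintro rfl; exact hpj (dvd_zero p)
  refine ⟨by omega, fun h => hpj ?_⟩
  rw [← Nat.sub_sub_self hjm.le]
  exact Nat.dvd_sub hpm h

lemma prod_nonMultiples_reflect {M : Type*} [CommMonoid M] {p m : ℕ} (hpm : p ∣ m)
    (f : ℕ → M) :
    ∏ j ∈ nonMultiples p m, f (m - j) = ∏ j ∈ nonMultiples p m, f j := by
  refine prod_nbij' (m - ·) (m - ·) (fun j hj => sub_mem_nonMultiples hpm hj)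
    (fun j hj => sub_mem_nonMultiples hpm hj) (fun j hj => ?_) (fun j hj => ?_) fun _ _ => rfl
  all_goals exact Nat.sub_sub_self (mem_nonMultiples.mp hj).1.le

lemma isUnit_natCast_of_mem_nonMultiples {p m j K : ℕ} (hp : p.Prime) (hK : 0 < K)
    (hj : j ∈ nonMultiples p m) : IsUnit (j : ZMod (p ^ K)) :=
  (ZMod.isUnit_natCast_iff_not_dvd_pow hp hK).mpr (mem_nonMultiples.mp hj).2

lemma filter_not_dvd_Ico_one (p m : ℕ) : {j ∈ Ico 1 m | ¬ p ∣ j} = nonMultiples p m := by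
  ext j
  simp only [mem_filter, mem_Ico, mem_nonMultiples]
  constructor
  · rintro ⟨⟨-, hj⟩, hpj⟩
    exact ⟨hj, hpj⟩
  · rintro ⟨hj, hpj⟩
    exact ⟨⟨Nat.one_le_iff_ne_zero.mpr (by rintro rfl; exact hpj (dvd_zero p)), hj⟩, hpj⟩

lemma filter_dvd_Ico_one_mul {p : ℕ} (hp : 0 < p) (n : ℕ) :
    {j ∈ Ico 1 (p * n) | p ∣ j} = (Ico 1 n).image (p * ·) := by
  ext j
  simp only [mem_filter, mem_Ico, mem_image]
  constructor
  · rintro ⟨⟨h1, h2⟩, i, rfl⟩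
    exact ⟨i, ⟨Nat.pos_of_mul_pos_left h1, Nat.lt_of_mul_lt_mul_left h2⟩, rfl⟩
  · rintro ⟨i, ⟨h1, h2⟩, rfl⟩
    exact ⟨⟨Nat.mul_pos hp h1, Nat.mul_lt_mul_of_pos_left h2 hp⟩, dvd_mul_right p i⟩

lemma prod_Ico_one_mul {M : Type*} [CommMonoid M] {p : ℕ} (hp : 0 < p) (n : ℕ) (f : ℕ → M) :
    ∏ j ∈ Ico 1 (p * n), f j =
      (∏ j ∈ nonMultiples p (p * n), f j) * ∏ i ∈ Ico 1 n, f (p * i) := by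
  rw [← prod_filter_not_mul_prod_filter _ (p ∣ ·), filter_not_dvd_Ico_one,
    filter_dvd_Ico_one_mul hp,
    prod_image fun i _ j _ h => Nat.eq_of_mul_eq_mul_left hp h]

lemma sum_Ico_one_mul {M : Type*} [AddCommMonoid M] {p : ℕ} (hp : 0 < p) (n : ℕ)
    (f : ℕ → M) :
    ∑ j ∈ Ico 1 (p * n), f j =
      ∑ j ∈ nonMultiples p (p * n), f j + ∑ i ∈ Ico 1 n, f (p * i) := by
  rw [← sum_filter_not_add_sum_filter _ (p ∣ ·), filter_not_dvd_Ico_one,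
    filter_dvd_Ico_one_mul hp,
    sum_image fun i _ j _ h => Nat.eq_of_mul_eq_mul_left hp h]

lemma prod_Ico_one_add (c m : ℕ) :
    ∏ j ∈ Ico 1 m, (c + j) = (m - 1)! * (c + (m - 1)).choose (m - 1) := by
  rw [prod_Ico_eq_prod_range, ← ascFactorial_eq_factorial_mul_choose, ascFactorial_eq_prod_range]
  simp only [add_assoc]

lemma choose_mul_prod_nonMultiples {p : ℕ} (hp : 0 < p) (n : ℕ) :
    (3 * (p * n) - 1).choose (p * n - 1) * ∏ j ∈ nonMultiples p (p * n), j =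
      (3 * n - 1).choose (n - 1) * ∏ j ∈ nonMultiples p (p * n), (2 * (p * n) + j) := by
  have hsplit (c : ℕ) : (p * n - 1)! * (p * c + (p * n - 1)).choose (p * n - 1) =
      (∏ j ∈ nonMultiples p (p * n), (p * c + j)) *
        (p ^ (n - 1) * ((n - 1)! * (c + (n - 1)).choose (n - 1))) := by
    rw [← prod_Ico_one_add, ← prod_Ico_one_add, prod_Ico_one_mul hp]
    simp only [← mul_add, prod_mul_distrib, prod_const, Nat.card_Ico]
  have h0 := hsplit 0
  have h2 := hsplit (2 * n)
  simp only [mul_zero, zero_add, choose_self, mul_one] at h0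
  rw [show p * (2 * n) + (p * n - 1) = 3 * (p * n) - 1 by rw [mul_left_comm]; omega,
    show 2 * n + (n - 1) = 3 * n - 1 by omega, mul_left_comm p 2] at h2
  refine Nat.eq_of_mul_eq_mul_right (show 0 < p ^ (n - 1) * (n - 1)! by positivity) ?_
  calc (3 * (p * n) - 1).choose (p * n - 1) * (∏ j ∈ nonMultiples p (p * n), j) *
        (p ^ (n - 1) * (n - 1)!)
      = (p * n - 1)! * (3 * (p * n) - 1).choose (p * n - 1) := by rw [h0]; ring
    _ = _ := by rw [h2]; ring

lemma six_mul_sum_range_sq (N : ℕ) :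
    6 * ∑ i ∈ range N, i ^ 2 + 3 * N ^ 2 = 2 * N ^ 3 + N := by
  induction N with
  | zero => simp
  | succ N ih =>
    rw [sum_range_succ]
    linear_combination ih

lemma dvd_six_mul_sum_Ico_one_sq (N : ℕ) : N ∣ 6 * ∑ i ∈ Ico 1 N, i ^ 2 := by
  rw [sum_subset (fun i hi => mem_range.mpr (mem_Ico.mp hi).2) fun i hi hi' => by simp_all]
  have h : N ∣ 6 * ∑ i ∈ range N, i ^ 2 + 3 * N ^ 2 := by
    rw [six_mul_sum_range_sq]
    exact Dvd.intro (2 * N ^ 2 + 1) (by ring)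
  exact (Nat.dvd_add_left (Dvd.intro (3 * N) (by ring))).mp h

lemma dvd_six_mul_sum_nonMultiples_sq {p : ℕ} (hp : 0 < p) (b : ℕ) :
    p * b ∣ 6 * ∑ j ∈ nonMultiples p (p * b), j ^ 2 := by
  have hsplit := sum_Ico_one_mul hp b (· ^ 2)
  simp only [mul_pow, ← mul_sum] at hsplit
  have hmult : p * b ∣ 6 * (p ^ 2 * ∑ i ∈ Ico 1 b, i ^ 2) := by
    rw [mul_left_comm, pow_two, mul_assoc]
    exact mul_dvd_mul_left p (dvd_mul_of_dvd_right (dvd_six_mul_sum_Ico_one_sq b) p)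
  have htotal := dvd_six_mul_sum_Ico_one_sq (p * b)
  rw [hsplit, mul_add] at htotal
  exact (Nat.dvd_add_left hmult).mp htotal

lemma sum_range_mul_of_periodic {M : Type*} [AddCommMonoid M] {f : ℕ → M} {N : ℕ}
    (hf : Function.Periodic f N) (e : ℕ) :
    ∑ j ∈ range (N * e), f j = e • ∑ j ∈ range N, f j := by
  induction e with
  | zero => simp
  | succ e ih =>
    rw [Nat.mul_succ, sum_range_add, ih, succ_nsmul]
    congr 1
    refine sum_congr rfl fun i _ => ?_
    rw [add_comm, mul_comm]
    exact hf.nat_mul e i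

lemma sum_nonMultiples_inv {M : Type*} [AddCommMonoid M] {p k : ℕ} (hp : p.Prime) (hk : 0 < k)
    (g : ZMod (p ^ k) → M) :
    ∑ j ∈ nonMultiples p (p ^ k), g (j : ZMod (p ^ k))⁻¹ =
      ∑ j ∈ nonMultiples p (p ^ k), g j := by
  have : NeZero (p ^ k) := ⟨pow_ne_zero k hp.ne_zero⟩
  have hunit {j : ℕ} (hj : j ∈ nonMultiples p (p ^ k)) : IsUnit (j : ZMod (p ^ k)) :=
    isUnit_natCast_of_mem_nonMultiples hp hk hj
  have hinv {j : ℕ} (hj : j ∈ nonMultiples p (p ^ k)) :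
      (((j : ZMod (p ^ k))⁻¹).val : ZMod (p ^ k))⁻¹ = j := by
    rw [ZMod.natCast_zmod_val]
    exact ZMod.inv_eq_of_mul_eq_one _ _ _ (ZMod.inv_mul_of_unit _ (hunit hj))
  have hmem {j : ℕ} (hj : j ∈ nonMultiples p (p ^ k)) :
      ((j : ZMod (p ^ k))⁻¹).val ∈ nonMultiples p (p ^ k) := by
    rw [mem_nonMultiples, ← ZMod.isUnit_natCast_iff_not_dvd_pow hp hk, ZMod.natCast_zmod_val]
    exact ⟨ZMod.val_lt _, .of_mul_eq_one _ (ZMod.inv_mul_of_unit _ (hunit hj))⟩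
  refine sum_nbij' (fun j => ((j : ZMod (p ^ k))⁻¹).val) (fun j => ((j : ZMod (p ^ k))⁻¹).val)
    (fun j hj => hmem hj) (fun j hj => hmem hj) (fun j hj => ?_) (fun j hj => ?_)
    (fun j _ => by rw [ZMod.natCast_zmod_val])
  all_goals rw [hinv hj, ZMod.val_natCast_of_lt (mem_nonMultiples.mp hj).1]

lemma six_mul_sum_nonMultiples_inv_sq {p k : ℕ} (hp : p.Prime) (hk : 0 < k) (d : ℕ) :
    6 * ∑ j ∈ nonMultiples p (p ^ k * d), ((j : ZMod (p ^ k))⁻¹) ^ 2 = 0 := by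
  have hper : Function.Periodic
      (fun j : ℕ => if ¬ p ∣ j then ((j : ZMod (p ^ k))⁻¹) ^ 2 else 0) (p ^ k) := by
    intro j
    simp only [Nat.cast_add, ZMod.natCast_self, add_zero,
      Nat.dvd_add_left (dvd_pow_self p hk.ne')]
  have hblock : ∑ j ∈ nonMultiples p (p ^ k * d), ((j : ZMod (p ^ k))⁻¹) ^ 2 =
      d • ∑ j ∈ nonMultiples p (p ^ k), ((j : ZMod (p ^ k))⁻¹) ^ 2 := by
    simp only [nonMultiples, sum_filter]
    exact sum_range_mul_of_periodic hper d
  have hsq : (6 : ZMod (p ^ k)) * ∑ j ∈ nonMultiples p (p ^ k), (j : ZMod (p ^ k)) ^ 2 = 0 := by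
    have h := dvd_six_mul_sum_nonMultiples_sq hp.pos (p ^ (k - 1))
    rw [mul_pow_sub_one hk.ne'] at h
    exact_mod_cast (ZMod.natCast_eq_zero_iff _ _).mpr h
  rw [hblock, sum_nonMultiples_inv hp hk (· ^ 2), mul_smul_comm, hsq, smul_zero]

lemma ZMod.natCast_mul_eq_zero_of_castHom_eq_zero {N a b : ℕ} [NeZero N] (hN : N ∣ a * b)
    (ha : a ∣ N) {y : ZMod N} (hy : ZMod.castHom ha (ZMod a) y = 0) : (b : ZMod N) * y = 0 := by
  rw [ZMod.castHom_apply, ZMod.cast_eq_val, ZMod.natCast_eq_zero_iff] at hy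
  obtain ⟨c, hc⟩ := hy
  rw [← ZMod.natCast_zmod_val y, hc, ← Nat.cast_mul, ZMod.natCast_eq_zero_iff]
  exact hN.trans ⟨c, by ring⟩

lemma six_mul_sq_mul_sum_nonMultiples_inv_sq {p k : ℕ} (hp : p.Prime) (hk : 0 < k) (d : ℕ) :
    6 * ((p ^ k * d : ℕ) : ZMod (p ^ (3 * k))) ^ 2 *
      ∑ j ∈ nonMultiples p (p ^ k * d), ((j : ZMod (p ^ (3 * k)))⁻¹) ^ 2 = 0 := by
  have : NeZero (p ^ (3 * k)) := ⟨pow_ne_zero _ hp.ne_zero⟩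
  have hdvd : p ^ k ∣ p ^ (3 * k) := pow_dvd_pow p (by omega)
  set red := ZMod.castHom hdvd (ZMod (p ^ k))
  have hredinv : ∀ j ∈ nonMultiples p (p ^ k * d),
      red (j : ZMod (p ^ (3 * k)))⁻¹ = (j : ZMod (p ^ k))⁻¹ := fun j hj => by
    refine (ZMod.inv_eq_of_mul_eq_one _ _ _ ?_).symm
    rw [← map_natCast red j, ← map_mul,
      ZMod.mul_inv_of_unit _ (isUnit_natCast_of_mem_nonMultiples hp (by omega) hj), map_one]
  have hker : ((p ^ (2 * k) : ℕ) : ZMod (p ^ (3 * k))) *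
      (6 * ∑ j ∈ nonMultiples p (p ^ k * d), ((j : ZMod (p ^ (3 * k)))⁻¹) ^ 2) = 0 := by
    refine ZMod.natCast_mul_eq_zero_of_castHom_eq_zero ⟨1, by ring⟩ hdvd ?_
    rw [map_mul, map_sum, map_ofNat]
    simp only [map_pow]
    rw [sum_congr rfl fun j hj => by rw [hredinv j hj]]
    exact six_mul_sum_nonMultiples_inv_sq hp hk d
  rw [← mul_zero (((d : ℕ) : ZMod (p ^ (3 * k))) ^ 2), ← hker]
  push_cast
  ring

lemma prod_one_add_mul_of_sq_eq_zero {R ι : Type*} [CommRing R] {ε : R} (hε : ε ^ 2 = 0)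
    (s : Finset ι) (t : ι → R) : ∏ i ∈ s, (1 + ε * t i) = 1 + ε * ∑ i ∈ s, t i := by
  induction s using Finset.cons_induction with
  | empty => simp
  | cons a s ha ih =>
    rw [prod_cons, ih, sum_cons]
    linear_combination (t a * ∑ i ∈ s, t i) * hε

lemma dvd_prod_one_add_mul_sub_one {R ι : Type*} [CommRing R] (c : R) (s : Finset ι)
    (t : ι → R) :
    c ∣ ∏ i ∈ s, (1 + c * t i) - 1 := by
  induction s using Finset.cons_induction with
  | empty => simp
  | cons a s ha ih =>
    obtain ⟨u, hu⟩ := ih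
    rw [prod_cons]
    exact ⟨t a * (1 + c * u) + u, by linear_combination (1 + c * t a) * hu⟩

lemma eq_one_of_sq_eq_one_of_isNilpotent_sub_one {R : Type*} [CommRing R] (h2 : IsUnit (2 : R))
    {g : R} (hg : g ^ 2 = 1) (hnil : IsNilpotent (g - 1)) : g = 1 := by
  have hunit : IsUnit (g + 1) := by
    convert hnil.isUnit_add_left_of_commute h2 (Commute.all _ _) using 1
    ring
  have hprod : (g - 1) * (g + 1) = 0 := by linear_combination hg
  exact sub_eq_zero.mp (hunit.mul_left_eq_zero.mp hprod)

lemma sq_prod_nonMultiples_one_add {N p m : ℕ} (hpm : p ∣ m) (hm : (m : ZMod N) ^ 3 = 0)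
    (hunit : ∀ j ∈ nonMultiples p m, IsUnit (j : ZMod N)) :
    (∏ j ∈ nonMultiples p m, (1 + 2 * m * (j : ZMod N)⁻¹)) ^ 2 =
      1 - 6 * (m : ZMod N) ^ 2 * ∑ j ∈ nonMultiples p m, ((j : ZMod N)⁻¹) ^ 2 := by
  set M : ZMod N := (m : ZMod N)
  have hpair : ∀ j ∈ nonMultiples p m,
      (1 + 2 * M * (j : ZMod N)⁻¹) * (1 + 2 * M * ((m - j : ℕ) : ZMod N)⁻¹) =
        1 + M ^ 2 * (-6 * ((j : ZMod N)⁻¹) ^ 2) := fun j hj => by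
    set x := (j : ZMod N)⁻¹
    set y := ((m - j : ℕ) : ZMod N)⁻¹
    have hx : (j : ZMod N) * x = 1 := ZMod.mul_inv_of_unit _ (hunit j hj)
    have hy : (M - j) * y = 1 := by
      rw [← Nat.cast_sub (mem_nonMultiples.mp hj).1.le]
      exact ZMod.mul_inv_of_unit _ (hunit _ (sub_mem_nonMultiples hpm hj))
    have hsum : x + y = M * x * y := by linear_combination (-x) * hy + (-y) * hx
    have hxy : x * y = -x ^ 2 + M * x ^ 2 * y := by linear_combination x * hsum
    linear_combination (2 * M) * hsum + (6 * M ^ 2) * hxy + (6 * x ^ 2 * y) * hm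
  calc (∏ j ∈ nonMultiples p m, (1 + 2 * M * (j : ZMod N)⁻¹)) ^ 2
      = ∏ j ∈ nonMultiples p m,
          (1 + 2 * M * (j : ZMod N)⁻¹) * (1 + 2 * M * ((m - j : ℕ) : ZMod N)⁻¹) := by
        rw [prod_mul_distrib, prod_nonMultiples_reflect hpm fun j => 1 + 2 * M * (j : ZMod N)⁻¹,
          sq]
    _ = 1 - 6 * M ^ 2 * ∑ j ∈ nonMultiples p m, ((j : ZMod N)⁻¹) ^ 2 := by
        rw [prod_congr rfl hpair, prod_one_add_mul_of_sq_eq_zero (by linear_combination M * hm),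
          ← mul_sum]
        ring

lemma prod_nonMultiples_two_mul_add {p k : ℕ} (hp : p.Prime) (hpodd : Odd p) (hk : 0 < k)
    (d : ℕ) :
    ∏ j ∈ nonMultiples p (p ^ k * d), ((2 * (p ^ k * d) + j : ℕ) : ZMod (p ^ (3 * k))) =
      ∏ j ∈ nonMultiples p (p ^ k * d), (j : ZMod (p ^ (3 * k))) := by
  set m := p ^ k * d
  have hm3 : (m : ZMod (p ^ (3 * k))) ^ 3 = 0 := by
    rw [← Nat.cast_pow, show m ^ 3 = p ^ (3 * k) * d ^ 3 by ring, Nat.cast_mul, ZMod.natCast_self,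
      zero_mul]
  have hunit : ∀ j ∈ nonMultiples p m, IsUnit (j : ZMod (p ^ (3 * k))) := fun _ hj =>
    isUnit_natCast_of_mem_nonMultiples hp (by omega) hj
  set G := ∏ j ∈ nonMultiples p m, (1 + 2 * m * (j : ZMod (p ^ (3 * k)))⁻¹)
  have hfactor : ∏ j ∈ nonMultiples p m, ((2 * m + j : ℕ) : ZMod (p ^ (3 * k))) =
      (∏ j ∈ nonMultiples p m, (j : ZMod (p ^ (3 * k)))) * G := by
    rw [← prod_mul_distrib]
    refine prod_congr rfl fun j hj => ?_
    push_cast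
    linear_combination (-2 * (m : ZMod (p ^ (3 * k)))) * ZMod.mul_inv_of_unit _ (hunit j hj)
  have hG : G ^ 2 = 1 := by
    rw [sq_prod_nonMultiples_one_add (dvd_mul_of_dvd_left (dvd_pow_self p hk.ne') d) hm3 hunit,
      six_mul_sq_mul_sum_nonMultiples_inv_sq hp hk d, sub_zero]
  have hnil : IsNilpotent (G - 1) := by
    obtain ⟨u, hu⟩ := dvd_prod_one_add_mul_sub_one (2 * (m : ZMod (p ^ (3 * k))))
      (nonMultiples p m) fun j => (j : ZMod (p ^ (3 * k)))⁻¹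
    rw [hu]
    exact (Commute.all _ _).isNilpotent_mul_right ⟨3, by rw [mul_pow, hm3, mul_zero]⟩
  have h2 : IsUnit (2 : ZMod (p ^ (3 * k))) := by
    exact_mod_cast (ZMod.isUnit_iff_coprime 2 _).mpr (Nat.coprime_two_left.mpr (hpodd.pow))
  rw [hfactor, eq_one_of_sq_eq_one_of_isNilpotent_sub_one h2 hG hnil, mul_one]

theorem stmt_4_general (p k d : ℕ) (hp : p.Prime) (hpodd : Odd p) (hk : 1 ≤ k) :
    (Nat.choose (3*p^k*d - 1) (p^k*d - 1) : ℤ) ≡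
      (Nat.choose (3*p^(k-1)*d - 1) (p^(k-1)*d - 1) : ℤ) [ZMOD (p^(3*k))] := by
  have hm : p * (p ^ (k - 1) * d) = p ^ k * d := by rw [← mul_assoc, mul_pow_sub_one (by omega)]
  have key := congrArg (Nat.cast : ℕ → ZMod (p ^ (3 * k)))
    (choose_mul_prod_nonMultiples hp.pos (p ^ (k - 1) * d))
  rw [hm, Nat.cast_mul, Nat.cast_mul, Nat.cast_prod, Nat.cast_prod,
    prod_nonMultiples_two_mul_add hp hpodd hk d] at key
  have hunit : IsUnit (∏ j ∈ nonMultiples p (p ^ k * d), (j : ZMod (p ^ (3 * k)))) :=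
    IsUnit.prod_iff.mpr fun _ hj => isUnit_natCast_of_mem_nonMultiples hp (by omega) hj
  rw [← Nat.cast_pow, ← ZMod.intCast_eq_intCast_iff, mul_assoc, mul_assoc]
  push_cast
  exact (hunit.mul_left_inj).mp key

theorem stmt_4 (p k d : ℕ) (hp : p.Prime) (hpodd : Odd p) (hk : 1 ≤ k)
    (hd : 0 < d) (hnd : ¬ p ∣ d) :
    (Nat.choose (3*p^k*d - 1) (p^k*d - 1) : ℤ) ≡
      (Nat.choose (3*p^(k-1)*d - 1) (p^(k-1)*d - 1) : ℤ) [ZMOD (p^(3*k))] :=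
  stmt_4_general p k d hp hpodd hk
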